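/- arXiv:2604.17560 — 5 statements merged into one kernel-verified Lean document; each statement's English description precedes it below -/
import Mathlib

section
/- Polarization identity of monomials: for nonnegative integers b₁,...,b_M with S = b₁ + ... + b_M and real variables θ₁,...,θ_M, one has ∏_{i=1}^M θ_i^{b_i} = (1/S!) ∑_{v₁=0}^{b₁} ⋯ ∑_{v_M=0}^{b_M} (-1)^{v₁+⋯+v_M} (∏_{i=1}^M C(b_i, v_i)) (∑_{i=1}^M (b_i/2 - v_i) θ_i)^S. -/
open Finset

private lemma diff_step (n : ℕ) (g : ℕ → ℝ) :
    ∑ v ∈ range (n+2), (-1:ℝ)^v * ((n+1).choose v) * g v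
      = ∑ v ∈ range (n+1), (-1:ℝ)^v * (n.choose v) * (g v - g (v+1)) := by
  have key : ∑ i ∈ range (n+1), (-1:ℝ)^(i+1) * (n.choose (i+1)) * g (i+1)
      = (∑ v ∈ range (n+1), (-1:ℝ)^v * (n.choose v) * g v) - g 0 := by
    have h2 := Finset.sum_range_succ' (fun v => (-1:ℝ)^v * (n.choose v) * g v) (n+1)
    rw [Finset.sum_range_succ] at h2
    simp only [Nat.choose_succ_self, Nat.cast_zero, mul_zero, zero_mul, add_zero,
      pow_zero, Nat.choose_zero_right, Nat.cast_one, one_mul, mul_one] at h2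
    linarith
  rw [Finset.sum_range_succ' (fun v => (-1:ℝ)^v * ((n+1).choose v) * g v) (n+1)]
  have hc : ∀ i ∈ range (n+1), (-1:ℝ)^(i+1) * ((n+1).choose (i+1)) * g (i+1)
      = (-((-1:ℝ)^i * (n.choose i) * g (i+1))) + (-1:ℝ)^(i+1) * (n.choose (i+1)) * g (i+1) := by
    intro i _
    rw [Nat.choose_succ_succ]
    push_cast
    ring
  rw [Finset.sum_congr rfl hc, Finset.sum_add_distrib, key]
  simp only [mul_sub]
  rw [Finset.sum_sub_distrib, Finset.sum_neg_distrib]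
  simp only [pow_zero, Nat.choose_zero_right, Nat.cast_one, one_mul]
  ring

private lemma fin_diff (b : ℕ) : ∀ k : ℕ, k ≤ b → ∀ a : ℝ,
    (∑ v ∈ range (b+1), (-1:ℝ)^v * (b.choose v) * (a - v)^k)
      = if k = b then (b.factorial : ℝ) else 0 := by
  induction b with
  | zero =>
    intro k hk a
    interval_cases k
    simp
  | succ b ih =>
    intro k hk a
    rw [show b + 1 + 1 = b + 2 from rfl, diff_step b (fun v => (a - v)^k)]
    have expand : ∀ v ∈ range (b+1), (a - ((v:ℕ):ℝ))^k - (a - (((v+1:ℕ)):ℝ))^k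
        = ∑ j ∈ range k, (k.choose j : ℝ) * ((a - 1) - (v:ℕ))^j := by
      intro v _
      have h1 : a - (((v+1:ℕ)):ℝ) = (a - 1) - (v:ℕ) := by push_cast; ring
      have h2 : (a - ((v:ℕ):ℝ)) ^ k
          = ∑ j ∈ range (k+1), (k.choose j : ℝ) * ((a-1) - (v:ℕ))^j := by
        have h := add_pow ((a - 1) - ((v:ℕ):ℝ)) 1 k
        rw [show a - ((v:ℕ):ℝ) = ((a-1) - (v:ℕ)) + 1 by ring, h]
        exact Finset.sum_congr rfl fun j _ => by rw [one_pow]; ring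
      rw [h1, h2, Finset.sum_range_succ]
      simp [Nat.choose_self]
    calc ∑ v ∈ range (b+1), (-1:ℝ)^v * (b.choose v) * ((a - ((v:ℕ):ℝ))^k - (a - (((v+1:ℕ)):ℝ))^k)
        = ∑ v ∈ range (b+1), ∑ j ∈ range k,
            (k.choose j : ℝ) * ((-1:ℝ)^v * (b.choose v) * ((a - 1) - (v:ℕ))^j) := by
          refine Finset.sum_congr rfl fun v hv => ?_
          rw [expand v hv, Finset.mul_sum]
          exact Finset.sum_congr rfl fun j _ => by ring
      _ = ∑ j ∈ range k, (k.choose j : ℝ) *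
            ∑ v ∈ range (b+1), (-1:ℝ)^v * (b.choose v) * ((a - 1) - (v:ℕ))^j := by
          rw [Finset.sum_comm]
          exact Finset.sum_congr rfl fun j _ => by rw [Finset.mul_sum]
      _ = ∑ j ∈ range k, (k.choose j : ℝ) * (if j = b then (b.factorial : ℝ) else 0) := by
          refine Finset.sum_congr rfl fun j hj => ?_
          rw [ih j (by have := Finset.mem_range.mp hj; omega) (a - 1)]
      _ = if k = b + 1 then ((b+1).factorial : ℝ) else 0 := by
          rcases eq_or_lt_of_le hk with hk | hk
          · subst hk
            rw [if_pos rfl]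
            rw [Finset.sum_eq_single_of_mem b (by simp)
              (fun j _ hjb => by rw [if_neg hjb, mul_zero])]
            rw [if_pos rfl]
            have hcb : ((b+1).choose b) = b+1 := Nat.choose_succ_self_right b
            rw [hcb, Nat.factorial_succ]
            push_cast
            ring
          · rw [if_neg (by omega)]
            refine Finset.sum_eq_zero fun j hj => ?_
            rw [if_neg (by simp only [Finset.mem_range] at hj; omega), mul_zero]

theorem polarization_identity_monomial {M : ℕ} (b : Fin M → ℕ) (θ : Fin M → ℝ) :
    (∏ i, θ i ^ b i) =
      (1 / (Nat.factorial (∑ i, b i) : ℝ)) *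
        ∑ v : (∀ i, Fin (b i + 1)),
          (-1 : ℝ) ^ (∑ i, (v i : ℕ)) *
            (∏ i, (Nat.choose (b i) (v i) : ℝ)) *
            (∑ i, ((b i : ℝ) / 2 - ((v i : ℕ) : ℝ)) * θ i) ^ (∑ i, b i) := by
  classical
  set S : ℕ := ∑ i, b i with hS
  -- Step 1: expand each power via the multinomial theorem and combine products
  have step1 : ∀ v : (∀ i, Fin (b i + 1)),
      (-1 : ℝ) ^ (∑ i, (v i : ℕ)) * (∏ i, ((b i).choose (v i) : ℝ)) *
          (∑ i, ((b i : ℝ) / 2 - ((v i : ℕ) : ℝ)) * θ i) ^ S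
      = ∑ k ∈ piAntidiag univ S, (Nat.multinomial univ k : ℝ) *
          ∏ i, ((-1:ℝ)^(v i : ℕ) * ((b i).choose (v i) : ℝ) *
            (((b i : ℝ) / 2 - ((v i : ℕ) : ℝ)) * θ i) ^ (k i)) := by
    intro v
    rw [Finset.sum_pow_eq_sum_piAntidiag univ (fun i => ((b i : ℝ)/2 - ((v i : ℕ):ℝ)) * θ i) S,
      Finset.mul_sum]
    refine Finset.sum_congr rfl fun k _ => ?_
    rw [← Finset.prod_pow_eq_pow_sum univ (fun i => (v i : ℕ)) (-1:ℝ)]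
    simp only [Finset.prod_mul_distrib]
    ring
  rw [Finset.sum_congr rfl fun v _ => step1 v, Finset.sum_comm]
  -- Step 2: for each multi-index k, factor the sum over v as a product
  have step2 : ∀ k : Fin M → ℕ,
      (∑ v : (∀ i, Fin (b i + 1)), (Nat.multinomial univ k : ℝ) *
          ∏ i, ((-1:ℝ)^(v i : ℕ) * ((b i).choose (v i) : ℝ) *
            (((b i : ℝ) / 2 - ((v i : ℕ) : ℝ)) * θ i) ^ (k i)))
      = (Nat.multinomial univ k : ℝ) *
          ∏ i, (θ i ^ (k i) * ∑ j ∈ range (b i + 1),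
            (-1:ℝ)^j * ((b i).choose j : ℝ) * ((b i : ℝ)/2 - (j:ℝ)) ^ (k i)) := by
    intro k
    rw [← Finset.mul_sum]
    congr 1
    have := Finset.prod_univ_sum (fun i => (univ : Finset (Fin (b i + 1))))
      (fun i j => (-1:ℝ)^(j : ℕ) * ((b i).choose j : ℝ) *
        (((b i : ℝ) / 2 - ((j : ℕ) : ℝ)) * θ i) ^ (k i))
    rw [Fintype.piFinset_univ] at this
    rw [← this]
    refine Finset.prod_congr rfl fun i _ => ?_
    rw [Finset.mul_sum, ← Fin.sum_univ_eq_sum_range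
      (fun j => θ i ^ (k i) * ((-1:ℝ)^j * ((b i).choose j : ℝ) * ((b i : ℝ)/2 - (j:ℝ)) ^ (k i)))]
    exact Finset.sum_congr rfl fun j _ => by rw [mul_pow]; ring
  rw [Finset.sum_congr rfl fun k _ => step2 k]
  -- Step 3: evaluate the sum over piAntidiag; only k = b survives
  rw [Finset.sum_eq_single_of_mem b (by simp [hS])]
  · have hfac : ∀ i : Fin M,
        (∑ j ∈ range (b i + 1), (-1:ℝ)^j * ((b i).choose j : ℝ) * ((b i : ℝ)/2 - (j:ℝ)) ^ (b i))
          = ((b i).factorial : ℝ) := by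
      intro i
      rw [fin_diff (b i) (b i) le_rfl ((b i : ℝ)/2), if_pos rfl]
    have : (∏ i, (θ i ^ (b i) * ∑ j ∈ range (b i + 1),
        (-1:ℝ)^j * ((b i).choose j : ℝ) * ((b i : ℝ)/2 - (j:ℝ)) ^ (b i)))
        = (∏ i, θ i ^ (b i)) * ∏ i, ((b i).factorial : ℝ) := by
      rw [Finset.prod_mul_distrib]
      congr 1
      exact Finset.prod_congr rfl fun i _ => hfac i
    rw [this]
    have hmul : ((Nat.multinomial univ b : ℝ)) * ∏ i, ((b i).factorial : ℝ) = (S.factorial : ℝ) := by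
      rw [mul_comm, ← Nat.cast_prod, ← Nat.cast_mul, Nat.multinomial_spec]
    have hS0 : (S.factorial : ℝ) ≠ 0 := by positivity
    rw [show (Nat.multinomial univ b : ℝ) * ((∏ i, θ i ^ b i) * ∏ i, ((b i).factorial : ℝ))
        = ((Nat.multinomial univ b : ℝ) * ∏ i, ((b i).factorial : ℝ)) * ∏ i, θ i ^ b i by ring,
      hmul]
    field_simp
  · intro k hk hkb
    -- find j with k j < b j
    have hksum : ∑ i, k i = S := by
      rw [Finset.mem_piAntidiag] at hk
      exact hk.1
    have hj : ∃ j, k j < b j := by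
      by_contra h
      push_neg at h
      have hne : ∃ j, b j < k j := by
        by_contra h2
        push_neg at h2
        exact hkb (funext fun j => le_antisymm (h2 j) (h j))
      obtain ⟨j0, hj0⟩ := hne
      have : S < ∑ i, k i := by
        rw [hS]
        exact Finset.sum_lt_sum (fun i _ => h i) ⟨j0, Finset.mem_univ j0, hj0⟩
      omega
    obtain ⟨j, hj⟩ := hj
    apply mul_eq_zero_of_right
    apply Finset.prod_eq_zero (Finset.mem_univ j)
    rw [fin_diff (b j) (k j) (le_of_lt hj) ((b j : ℝ)/2), if_neg (by omega), mul_zero]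
end

section
/- Let U ⊂ ℝ^m be a nonempty compact set and f : U → ℝ continuous; define f*(t) = max_{u ∈ U} (⟨u, t⟩ − f(u)). Let E : ℝ^p → ℝ^m with each component E_j = a_j − b_j where a_j, b_j : ℝ^p → ℝ are convex. Define c_j⁺ = max(−min_{u∈U} u_j, 0) and d_j⁺ = max(max_{u∈U} u_j, 0), and h(θ) = ⟨c⁺, a(θ)⟩ + ⟨d⁺, b(θ)⟩. Then the function g(θ) := f*(E(θ)) + h(θ) is convex, and consequently f*(E(θ)) = g(θ) − h(θ) is a difference of two convex functions. -/
open RealInnerProductSpace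

lemma convexOn_finset_sum' {E : Type*} [AddCommGroup E] [Module ℝ E]
    {ι : Type*} (t : Finset ι) (F : ι → E → ℝ)
    (hF : ∀ i ∈ t, ConvexOn ℝ Set.univ (F i)) :
    ConvexOn ℝ Set.univ (fun x => ∑ i ∈ t, F i x) := by
  classical
  induction t using Finset.induction_on with
  | empty => simpa using convexOn_const (0:ℝ) convex_univ
  | insert j s hni ih =>
      simp only [Finset.sum_insert hni]
      exact (hF _ (Finset.mem_insert_self _ _)).add
        (ih fun i hi => hF i (Finset.mem_insert_of_mem hi))

theorem conjugate_composition_bdc {m p : ℕ}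
    (U : Set (EuclideanSpace ℝ (Fin m))) (hUne : U.Nonempty) (hUc : IsCompact U)
    (f : EuclideanSpace ℝ (Fin m) → ℝ) (hf : ContinuousOn f U)
    (a b : Fin m → EuclideanSpace ℝ (Fin p) → ℝ)
    (ha : ∀ j, ConvexOn ℝ Set.univ (a j)) (hb : ∀ j, ConvexOn ℝ Set.univ (b j))
    (E : EuclideanSpace ℝ (Fin p) → EuclideanSpace ℝ (Fin m))
    (hE : ∀ θ j, E θ j = a j θ - b j θ)
    (fstar : EuclideanSpace ℝ (Fin m) → ℝ)
    (hfstar : ∀ t, fstar t = sSup ((fun u => (⟪u, t⟫ : ℝ) - f u) '' U))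
    (cplus dplus : Fin m → ℝ)
    (hc : ∀ j, cplus j = max (-(sInf ((fun u => u j) '' U))) 0)
    (hd : ∀ j, dplus j = max (sSup ((fun u => u j) '' U)) 0)
    (h g : EuclideanSpace ℝ (Fin p) → ℝ)
    (hh : ∀ θ, h θ = (∑ j, cplus j * a j θ) + ∑ j, dplus j * b j θ)
    (hg : ∀ θ, g θ = fstar (E θ) + h θ) :
    ConvexOn ℝ Set.univ g ∧ ConvexOn ℝ Set.univ h ∧
      ∀ θ, fstar (E θ) = g θ - h θ := by
  classical
  have hcpos : ∀ j, 0 ≤ cplus j := fun j => (hc j) ▸ le_max_right _ _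
  have hdpos : ∀ j, 0 ≤ dplus j := fun j => (hd j) ▸ le_max_right _ _
  have hproj : ∀ j : Fin m, Continuous fun u : EuclideanSpace ℝ (Fin m) => u j :=
    fun j => (continuous_apply j).comp (PiLp.continuous_ofLp 2 _)
  -- bounds on u j
  have hclb : ∀ (j : Fin m), ∀ u ∈ U, -(cplus j) ≤ u j := by
    intro j u hu
    have h1 : sInf ((fun u => u j) '' U) ≤ u j :=
      csInf_le ((hUc.image (hproj j)).bddBelow) ⟨u, hu, rfl⟩
    have h2 := le_max_left (-(sInf ((fun u => u j) '' U))) 0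
    rw [hc j]; linarith
  have hdub : ∀ (j : Fin m), ∀ u ∈ U, u j ≤ dplus j := by
    intro j u hu
    have h1 : u j ≤ sSup ((fun u => u j) '' U) :=
      le_csSup ((hUc.image (hproj j)).bddAbove) ⟨u, hu, rfl⟩
    have h2 := le_max_left (sSup ((fun u => u j) '' U)) 0
    rw [hd j]; linarith
  -- convexity of h
  have hhconv : ConvexOn ℝ Set.univ h := by
    have h1 : ConvexOn ℝ Set.univ (fun θ => ∑ j, cplus j * a j θ) :=
      convexOn_finset_sum' Finset.univ _ (fun j _ => (ha j).smul (hcpos j))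
    have h2 : ConvexOn ℝ Set.univ (fun θ => ∑ j, dplus j * b j θ) :=
      convexOn_finset_sum' Finset.univ _ (fun j _ => (hb j).smul (hdpos j))
    have := h1.add h2
    rw [show h = _ from funext hh]; exact this
  -- the inner function and its key identity
  have key : ∀ (u : EuclideanSpace ℝ (Fin m)) θ,
      ((∑ j, (u j + cplus j) * a j θ) + (∑ j, (dplus j - u j) * b j θ)) - f u
        = ((⟪u, E θ⟫ : ℝ) - f u) + h θ := by
    intro u θ
    have h1 : (⟪u, E θ⟫ : ℝ) = ∑ j, u j * (a j θ - b j θ) := by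
      simp [PiLp.inner_apply, RCLike.inner_apply, hE, mul_comm]
    have h2 : (∑ j, (u j + cplus j) * a j θ) + (∑ j, (dplus j - u j) * b j θ)
        = (∑ j, u j * (a j θ - b j θ)) + ((∑ j, cplus j * a j θ) + ∑ j, dplus j * b j θ) := by
      rw [← Finset.sum_add_distrib, ← Finset.sum_add_distrib, ← Finset.sum_add_distrib]
      exact Finset.sum_congr rfl fun j _ => by ring
    rw [h1, hh θ]; linarith
  have hFconv : ∀ u ∈ U, ConvexOn ℝ Set.univ
      (fun θ => ((∑ j, (u j + cplus j) * a j θ) + (∑ j, (dplus j - u j) * b j θ)) - f u) := by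
    intro u hu
    have hA : ConvexOn ℝ Set.univ (fun θ => ∑ j, (u j + cplus j) * a j θ) :=
      convexOn_finset_sum' Finset.univ _ (fun j _ => (ha j).smul (by have := hclb j u hu; linarith))
    have hB : ConvexOn ℝ Set.univ (fun θ => ∑ j, (dplus j - u j) * b j θ) :=
      convexOn_finset_sum' Finset.univ _ (fun j _ => (hb j).smul (by have := hdub j u hu; linarith))
    have := (hA.add hB).add (convexOn_const (-f u) convex_univ)
    simp only [sub_eq_add_neg] at this ⊢
    exact this
  -- continuity / bddAbove of the sup family
  have hφ : ∀ t : EuclideanSpace ℝ (Fin m),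
      BddAbove ((fun u => (⟪u, t⟫ : ℝ) - f u) '' U) ∧
      ((fun u => (⟪u, t⟫ : ℝ) - f u) '' U).Nonempty := by
    intro t
    have hcont : ContinuousOn (fun u => (⟪u, t⟫ : ℝ) - f u) U :=
      ((continuous_id.inner continuous_const).continuousOn).sub hf
    exact ⟨(hUc.image_of_continuousOn hcont).bddAbove, hUne.image _⟩
  -- key bound: inner function ≤ g
  have hFle : ∀ u ∈ U, ∀ θ,
      ((∑ j, (u j + cplus j) * a j θ) + (∑ j, (dplus j - u j) * b j θ)) - f u ≤ g θ := by
    intro u hu θ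
    have h1 : (⟪u, E θ⟫ : ℝ) - f u ≤ fstar (E θ) := by
      rw [hfstar]
      exact le_csSup (hφ (E θ)).1 ⟨u, hu, rfl⟩
    rw [key u θ, hg θ]; linarith
  -- convexity of g
  have hgconv : ConvexOn ℝ Set.univ g := by
    refine ⟨convex_univ, fun x _ y _ s t hs ht hst => ?_⟩
    simp only [smul_eq_mul]
    have : fstar (E (s • x + t • y)) ≤ s * g x + t * g y - h (s • x + t • y) := by
      rw [hfstar]
      apply csSup_le (hφ (E (s • x + t • y))).2
      rintro z ⟨u, hu, rfl⟩
      show (⟪u, E (s • x + t • y)⟫ : ℝ) - f u ≤ s * g x + t * g y - h (s • x + t • y)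
      have hk := key u (s • x + t • y)
      have hconv := (hFconv u hu).2 (Set.mem_univ x) (Set.mem_univ y) hs ht hst
      simp only [smul_eq_mul] at hconv
      have h1 := hFle u hu x
      have h2 := hFle u hu y
      linarith [mul_le_mul_of_nonneg_left h1 hs, mul_le_mul_of_nonneg_left h2 ht]
    rw [hg]; linarith
  exact ⟨hgconv, hhconv, fun θ => by rw [hg θ]; ring⟩
end

section
/- Let g : ℝ^d → ℝ be convex and differentiable, h : ℝ^d → ℝ convex, ρ > 0, and let u ∈ ∂h(θᵏ). If θᵏ⁺¹ minimizes the function θ ↦ g(θ) − ⟨u, θ⟩ + (ρ/2)‖θ − θᵏ‖² over ℝ^d, then ‖θᵏ⁺¹ − θᵏ‖ ≤ (2/ρ)·‖∇g(θᵏ) − u‖. -/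
open RealInnerProductSpace

theorem proximal_dca_step_bound {d : ℕ}
    (g h : EuclideanSpace ℝ (Fin d) → ℝ)
    (hg : ConvexOn ℝ Set.univ g)
    (g' : EuclideanSpace ℝ (Fin d) → EuclideanSpace ℝ (Fin d))
    (hg' : ∀ x, HasGradientAt g (g' x) x)
    (hh : ConvexOn ℝ Set.univ h) (ρ : ℝ) (hρ : 0 < ρ)
    (θk θk1 u : EuclideanSpace ℝ (Fin d))
    (hu : ∀ x, h θk + (⟪u, x - θk⟫ : ℝ) ≤ h x)
    (hmin : ∀ θ, g θk1 - ⟪u, θk1⟫ + (ρ / 2) * ‖θk1 - θk‖ ^ 2 ≤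
      g θ - ⟪u, θ⟫ + (ρ / 2) * ‖θ - θk‖ ^ 2) :
    ‖θk1 - θk‖ ≤ (2 / ρ) * ‖g' θk - u‖ := by
  set δ := θk1 - θk with hδ
  -- gradient inequality: ⟪g' θk, δ⟫ ≤ g θk1 - g θk
  have hgrad : (⟪g' θk, δ⟫ : ℝ) ≤ g θk1 - g θk := by
    set φ : ℝ → ℝ := fun t => g (θk + t • δ) with hφ
    have hφconv : ConvexOn ℝ Set.univ φ := by
      have := hg.comp_affineMap
        (AffineMap.lineMap θk θk1 : ℝ →ᵃ[ℝ] EuclideanSpace ℝ (Fin d))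
      convert this.subset (Set.subset_univ _) convex_univ using 1
      all_goals try rfl
      ext t
      simp only [Function.comp, φ, AffineMap.lineMap_apply, hδ]
      rw [add_comm]
      norm_num [vsub_eq_sub, vadd_eq_add]
    have hcurve : HasDerivAt (fun t : ℝ => θk + t • δ) δ 0 := by
      simpa using ((hasDerivAt_id (0:ℝ)).smul_const δ).const_add θk
    have hφderiv : HasDerivAt φ (⟪g' θk, δ⟫ : ℝ) 0 := by
      have hf := (hg' θk).hasFDerivAt
      rw [show θk = θk + (0:ℝ) • δ by simp] at hf
      have := hf.comp_hasDerivAt (x := (0:ℝ)) hcurve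
      have h2 := this
      simp at h2
      exact h2
    have hslope := hφconv.le_slope_of_hasDerivAt (Set.mem_univ (0:ℝ))
      (Set.mem_univ (1:ℝ)) one_pos hφderiv
    have : slope φ 0 1 = g θk1 - g θk := by
      simp [slope_def_field, φ, hδ]
    linarith [hslope, this.le, this.ge]
  have hmin' := hmin θk
  simp only [sub_self, norm_zero] at hmin'
  have key : ρ / 2 * ‖δ‖ ^ 2 ≤ (⟪u - g' θk, δ⟫ : ℝ) := by
    have hinner : (⟪u, θk1⟫ : ℝ) - ⟪u, θk⟫ = ⟪u, δ⟫ := by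
      rw [hδ, inner_sub_right]
    have hsub : (⟪u - g' θk, δ⟫ : ℝ) = ⟪u, δ⟫ - ⟪g' θk, δ⟫ := by
      rw [inner_sub_left]
    nlinarith [hmin', hgrad]
  have hcs : (⟪u - g' θk, δ⟫ : ℝ) ≤ ‖g' θk - u‖ * ‖δ‖ := by
    calc (⟪u - g' θk, δ⟫ : ℝ) ≤ ‖u - g' θk‖ * ‖δ‖ := real_inner_le_norm _ _
    _ = ‖g' θk - u‖ * ‖δ‖ := by rw [norm_sub_rev]
  rcases eq_or_lt_of_le (norm_nonneg δ) with h0 | h0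
  · rw [← h0]
    positivity
  · have h1 : ρ / 2 * ‖δ‖ ≤ ‖g' θk - u‖ := by
      have := key.trans hcs
      nlinarith
    rw [div_mul_eq_mul_div, le_div_iff₀ hρ]
    nlinarith
end

section
/- Suppose g : ℝ^d → ℝ is twice continuously differentiable and ℓ-smooth with ℓ continuous, non-decreasing and subquadratic (ℓ(t)/t² → 0 as t → ∞), and suppose g(x) − inf g ≤ G for some point x and G ≥ 0. Then E := sup{u ≥ 0 : u² ≤ 2ℓ(2u)·G} is finite and ‖∇g(x)‖ ≤ E. -/
open MeasureTheory

open RealInnerProductSpace in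
theorem ell_smooth_gradient_bound {d : ℕ}
    (g : EuclideanSpace ℝ (Fin d) → ℝ)
    (g' : EuclideanSpace ℝ (Fin d) → EuclideanSpace ℝ (Fin d))
    (g'' : EuclideanSpace ℝ (Fin d) →
      EuclideanSpace ℝ (Fin d) →L[ℝ] EuclideanSpace ℝ (Fin d))
    (hg' : ∀ x, HasGradientAt g (g' x) x)
    (hg'' : ∀ x, HasFDerivAt g' (g'' x) x)
    (hcont : Continuous g'')
    (ℓ : ℝ → ℝ) (hℓcont : Continuous ℓ) (hℓmono : Monotone ℓ)
    (hℓpos : ∀ t, 0 ≤ t → 0 < ℓ t)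
    (hsub : Filter.Tendsto (fun t => ℓ t / t ^ 2) Filter.atTop (nhds 0))
    (hsmooth : ∀ᵐ x ∂volume, ‖g'' x‖ ≤ ℓ ‖g' x‖)
    (hbdd : BddBelow (Set.range g))
    (G : ℝ) (hG : 0 ≤ G)
    (x : EuclideanSpace ℝ (Fin d)) (hGx : g x - ⨅ y, g y ≤ G) :
    BddAbove {u : ℝ | 0 ≤ u ∧ u ^ 2 ≤ 2 * ℓ (2 * u) * G} ∧
    ‖g' x‖ ≤ sSup {u : ℝ | 0 ≤ u ∧ u ^ 2 ≤ 2 * ℓ (2 * u) * G} := by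
  set S := {u : ℝ | 0 ≤ u ∧ u ^ 2 ≤ 2 * ℓ (2 * u) * G} with hSdef
  have hℓ0 : 0 < ℓ 0 := hℓpos 0 le_rfl
  -- BddAbove
  have hbA : BddAbove S := by
    have hε : (0:ℝ) < (8 * (G+1))⁻¹ := by positivity
    obtain ⟨T₀, hT₀⟩ := Filter.eventually_atTop.mp (hsub.eventually (gt_mem_nhds hε))
    refine ⟨max T₀ 1, fun u hu => ?_⟩
    by_contra hB
    push_neg at hB
    have hu1 : 1 < u := lt_of_le_of_lt (le_max_right _ _) hB
    have h2u : T₀ ≤ 2 * u := by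
      have : T₀ ≤ max T₀ 1 := le_max_left _ _
      nlinarith
    have hlt := hT₀ (2*u) h2u
    rw [div_lt_iff₀ (by positivity)] at hlt
    have hu2 : u ^ 2 ≤ 2 * ℓ (2*u) * G := hu.2
    have hGG : G / (G + 1) < 1 := by
      rw [div_lt_one (by linarith)]; linarith
    have h4 : 2 * ℓ (2*u) * G ≤ 2 * ((8*(G+1))⁻¹ * (2*u)^2) * G := by nlinarith
    have h5 : 2 * ((8*(G+1))⁻¹ * (2*u)^2) * G = u^2 * (G/(G+1)) := by
      field_simp
      ring
    rw [h5] at h4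
    have h6 : u^2 * (G/(G+1)) < u^2 * 1 := by
      apply mul_lt_mul_of_pos_left hGG
      nlinarith
    linarith
  refine ⟨hbA, ?_⟩
  -- continuity of g'
  have hg'cont : Continuous g' := continuous_iff_continuousAt.mpr fun y => (hg'' y).continuousAt
  -- pointwise bound from a.e. bound
  have hpt : ∀ y, ‖g'' y‖ ≤ ℓ ‖g' y‖ := by
    by_contra hb
    push_neg at hb
    obtain ⟨y, hy⟩ := hb
    have hUopen : IsOpen {z | ℓ ‖g' z‖ < ‖g'' z‖} :=
      isOpen_lt (hℓcont.comp hg'cont.norm) hcont.norm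
    have h0 : volume {z | ℓ ‖g' z‖ < ‖g'' z‖} = 0 := by
      rw [MeasureTheory.ae_iff] at hsmooth
      refine measure_mono_null (fun z hz => ?_) hsmooth
      exact not_le.mpr hz
    exact absurd h0 (hUopen.measure_pos volume ⟨y, hy⟩).ne'
  set u := ‖g' x‖ with hu
  have hu0 : 0 ≤ u := norm_nonneg _
  have hmem : u ∈ S := by
    rcases eq_or_lt_of_le hu0 with h0 | hupos
    · refine ⟨hu0, ?_⟩
      rw [← h0]
      have h1 : (0:ℝ) ≤ 2 * ℓ 0 := by linarith
      have := mul_nonneg h1 hG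
      norm_num
      linarith
    -- main case
    · set L := ℓ (2 * u) with hL
      have hLpos : 0 < L := hℓpos _ (by positivity)
      set T := u / L with hT
      have hTpos : 0 < T := div_pos hupos hLpos
      set v := u⁻¹ • g' x with hv
      have hvnorm : ‖v‖ = 1 := by
        rw [hv, norm_smul, norm_inv, Real.norm_eq_abs, abs_of_pos hupos, ← hu]
        field_simp
      set h := fun t : ℝ => x - t • v with hhdef
      have hh0 : h 0 = x := by simp [hhdef]
      have hhd : ∀ t : ℝ, HasDerivAt h (-v) t := by
        intro t
        have : HasDerivAt (fun t : ℝ => t • v) ((1:ℝ) • v) t := (hasDerivAt_id t).smul_const v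
        simpa using this.const_sub x
      set f1 := fun t : ℝ => g' (h t) with hf1def
      have hf10 : f1 0 = g' x := by rw [hf1def]; simp [hh0]
      have hf1d : ∀ t : ℝ, HasDerivAt f1 (g'' (h t) (-v)) t := fun t =>
        (hg'' (h t)).comp_hasDerivAt t (hhd t)
      have hhcont : Continuous h := by
        apply continuous_const.sub
        exact continuous_id.smul continuous_const
      have hphi_cont : Continuous fun t => ‖f1 t‖ := (hg'cont.comp hhcont).norm
      -- mean value estimate given bound on the gradient norm along the path
      have mvt : ∀ b : ℝ, (∀ s ∈ Set.Ico (0:ℝ) b, ‖f1 s‖ ≤ 2 * u) →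
          ∀ t ∈ Set.Icc (0:ℝ) b, ‖f1 t - f1 0‖ ≤ L * (t - 0) := by
        intro b hbound
        apply norm_image_sub_le_of_norm_deriv_le_segment'
          (f' := fun s => g'' (h s) (-v))
          (fun s _ => (hf1d s).hasDerivWithinAt)
        intro s hs
        calc ‖g'' (h s) (-v)‖ ≤ ‖g'' (h s)‖ * ‖-v‖ := (g'' (h s)).le_opNorm _
          _ = ‖g'' (h s)‖ := by rw [norm_neg, hvnorm, mul_one]
          _ ≤ ℓ ‖g' (h s)‖ := hpt _
          _ ≤ ℓ (2 * u) := hℓmono (hbound s hs)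
          _ = L := rfl
      -- bootstrap: gradient norm stays ≤ 2u on [0,T]
      set C := {t : ℝ | ∀ s ∈ Set.Ico (0:ℝ) t, ‖f1 s‖ ≤ 2 * u} with hCdef
      have hCclosed : IsClosed C := by
        rw [← isOpen_compl_iff]
        refine isOpen_iff_mem_nhds.mpr fun t ht => ?_
        simp only [Set.mem_compl_iff, hCdef, Set.mem_setOf_eq, not_forall] at ht
        push_neg at ht
        obtain ⟨s, hs, hφ⟩ := ht
        refine Filter.mem_of_superset (Ioi_mem_nhds hs.2) fun t' ht' hC => ?_
        exact absurd (hC s ⟨hs.1, ht'⟩) (not_le.mpr hφ)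
      have hboot : Set.Icc (0:ℝ) T ⊆ C := by
        apply (hCclosed.inter isClosed_Icc).Icc_subset_of_forall_mem_nhdsWithin
        · intro s hs
          exact absurd hs (by simp [Set.Ico_self])
        · rintro t ⟨htC, ht0, htT⟩
          have h1 : ‖f1 t - f1 0‖ ≤ L * (t - 0) := mvt t htC t ⟨ht0, le_rfl⟩
          have h2 : ‖f1 t‖ < 2 * u := by
            have hLT : L * T = u := by rw [hT]; field_simp [hLpos.ne']
            calc ‖f1 t‖ = ‖f1 0 + (f1 t - f1 0)‖ := by rw [add_sub_cancel]
              _ ≤ ‖f1 0‖ + ‖f1 t - f1 0‖ := norm_add_le _ _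
              _ ≤ u + L * t := by
                  rw [hf10] at h1
                  rw [hf10, ← hu]
                  linarith
              _ < u + L * T := by
                  have := mul_lt_mul_of_pos_left htT hLpos
                  linarith
              _ = 2 * u := by rw [hLT]; ring
          have hopen : IsOpen {t' : ℝ | ‖f1 t'‖ < 2 * u} := isOpen_lt hphi_cont continuous_const
          obtain ⟨ε, hε, hball⟩ := Metric.isOpen_iff.mp hopen t h2
          refine Filter.mem_of_superset
            (Ioo_mem_nhdsGT_of_mem ⟨le_rfl, lt_add_of_pos_right t hε⟩) ?_
          rintro t' ⟨htt', ht'⟩ s hs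
          rcases lt_or_ge s t with hst | hst
          · exact htC s ⟨hs.1, hst⟩
          · refine (hball ?_).le
            rw [Metric.mem_ball, Real.dist_eq, abs_of_nonneg (by linarith)]
            have := hs.2
            linarith
      have hbound : ∀ s ∈ Set.Ico (0:ℝ) T, ‖f1 s‖ ≤ 2 * u :=
        hboot ⟨hTpos.le, le_rfl⟩
      have hKey : ∀ t ∈ Set.Icc (0:ℝ) T, ‖f1 t - f1 0‖ ≤ L * t := by
        intro t ht
        simpa using mvt T hbound t ht
      -- inner product lower bound
      have hInner : ∀ t ∈ Set.Icc (0:ℝ) T, u - L * t ≤ ⟪f1 t, v⟫ := by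
        intro t ht
        have h1 : ⟪f1 0, v⟫ = u := by
          rw [hf10, hv, real_inner_smul_right, real_inner_self_eq_norm_sq, ← hu]
          field_simp
        have h2 : |⟪f1 t - f1 0, v⟫| ≤ L * t := by
          calc |⟪f1 t - f1 0, v⟫| ≤ ‖f1 t - f1 0‖ * ‖v‖ := abs_real_inner_le_norm _ _
            _ = ‖f1 t - f1 0‖ := by rw [hvnorm, mul_one]
            _ ≤ L * t := hKey t ht
        have h3 : ⟪f1 t, v⟫ = ⟪f1 0, v⟫ + ⟪f1 t - f1 0, v⟫ := by
          rw [inner_sub_left]; ring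
        rw [h3, h1]
        have := abs_le.mp h2
        linarith
      -- descent function
      set ψ := fun t : ℝ => g (h t) - (L * t^2/2 - u * t) with hψdef
      have hψd : ∀ t : ℝ, HasDerivAt ψ (⟪g' (h t), -v⟫ - (L * t - u)) t := by
        intro t
        have h1 : HasDerivAt (fun t => g (h t)) (⟪g' (h t), -v⟫) t := by
          have h2 := ((hg' (h t)).hasFDerivAt).comp_hasDerivAt t (hhd t)
          simp [InnerProductSpace.toDual_apply_apply, Function.comp] at h2
          rw [inner_neg_right]
          exact h2
        have h2 : HasDerivAt (fun t : ℝ => L * t^2/2 - u * t) (L * t - u) t := by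
          have h3 : HasDerivAt (fun t : ℝ => L * t^2/2 - u * t)
              (L * (2 * t^1)/2 - u * 1) t := by
            exact (((hasDerivAt_pow 2 t).const_mul L).div_const 2).sub
              ((hasDerivAt_id t).const_mul u)
          convert h3 using 1
          ring
        exact h1.sub h2
      have hanti : AntitoneOn ψ (Set.Icc 0 T) := by
        apply antitoneOn_of_deriv_nonpos (convex_Icc 0 T)
        · exact fun t _ => ((hψd t).continuousAt).continuousWithinAt
        · exact fun t _ => ((hψd t).differentiableAt).differentiableWithinAt
        · intro t ht
          rw [interior_Icc] at ht
          rw [(hψd t).deriv]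
          have hi : u - L * t ≤ ⟪f1 t, v⟫ := hInner t ⟨ht.1.le, ht.2.le⟩
          have hn : ⟪g' (h t), -v⟫ = -⟪f1 t, v⟫ := by rw [inner_neg_right]
          rw [hn]
          linarith
      have hψT : ψ T ≤ ψ 0 := hanti (Set.left_mem_Icc.mpr hTpos.le)
        (Set.right_mem_Icc.mpr hTpos.le) hTpos.le
      have hψ0 : ψ 0 = g x := by simp [hψdef, hh0]
      have hψTval : ψ T = g (h T) + u^2 / (2 * L) := by
        show g (h T) - (L * T^2/2 - u * T) = g (h T) + u^2 / (2 * L)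
        have : L * T^2/2 - u * T = -(u^2/(2*L)) := by
          rw [hT]; field_simp; ring
        rw [this]; ring
      have hinf : (⨅ y, g y) ≤ g (h T) := ciInf_le hbdd (h T)
      have hfinal : u^2 / (2 * L) ≤ G := by
        rw [hψTval, hψ0] at hψT
        linarith
      refine ⟨hu0, ?_⟩
      rw [div_le_iff₀ (by positivity)] at hfinal
      calc u ^ 2 ≤ G * (2 * L) := hfinal
        _ = 2 * ℓ (2 * u) * G := by rw [hL]; ring
  exact le_csSup hbA hmem
end

section
/- Let g, h : ℝ^d → ℝ with g differentiable and L-smooth (gradient L-Lipschitz) and h convex, and f = g − h. Let u ∈ ∂h(θᵏ) and let θᵏ⁺¹ minimize θ ↦ g(θ) − ⟨u, θ⟩. Then for every θ ∈ ℝ^d: ⟨∇g(θᵏ) − u, θᵏ − θ⟩ − (L/2)‖θ − θᵏ‖² ≤ f(θᵏ) − f(θᵏ⁺¹). In particular, taking θ = θᵏ − (1/L)(∇g(θᵏ) − u), one obtains (1/(2L))‖∇g(θᵏ) − u‖² ≤ f(θᵏ) − f(θᵏ⁺¹). -/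
/-!
The descent lemma `g y ≤ g x + ⟪∇g x, y - x⟫ + L/2 ‖y - x‖²` comes from comparing
`t ↦ g (x + t (y - x))` on `[0, 1]` with a quadratic, whose derivative dominates by
Cauchy–Schwarz and the Lipschitz bound on `∇g`. Adding the subgradient inequality for `h` at
`θk1` and the minimality of `θk1` for `g - ⟪u, ·⟫` gives the gap bound; the second bound is the
first one at the maximizer `θ = θk - L⁻¹ (∇g θk - u)` of its left-hand side.
-/

open RealInnerProductSpace

section

open AffineMap

variable {E : Type*} [NormedAddCommGroup E] [InnerProductSpace ℝ E]

theorem HasGradientAt.hasDerivAt_comp_lineMap [CompleteSpace E] {g : E → ℝ} {g' x y : E} {t : ℝ}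
    (hg : HasGradientAt g g' (lineMap x y t)) :
    HasDerivAt (fun s => g (lineMap x y s)) ⟪g', y - x⟫ t := by
  have := hg.hasFDerivAt.comp_hasDerivAt t hasDerivAt_lineMap
  simp only [InnerProductSpace.toDual_apply_apply] at this
  exact this

theorem inner_sub_apply_lineMap_le {g' : E → E} {L : ℝ}
    (hLip : ∀ a b, ‖g' a - g' b‖ ≤ L * ‖a - b‖) (x y : E) {t : ℝ} (ht : 0 ≤ t) :
    ⟪g' (lineMap x y t) - g' x, y - x⟫ ≤ L * t * ‖y - x‖ ^ 2 := by
  have hdist : ‖lineMap x y t - x‖ = t * ‖y - x‖ := by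
    rw [← dist_eq_norm, dist_lineMap_left, Real.norm_of_nonneg ht, dist_comm, dist_eq_norm]
  calc ⟪g' (lineMap x y t) - g' x, y - x⟫
      ≤ ‖g' (lineMap x y t) - g' x‖ * ‖y - x‖ := real_inner_le_norm _ _
    _ ≤ L * (t * ‖y - x‖) * ‖y - x‖ := by
        gcongr
        exact hdist ▸ hLip _ _
    _ = L * t * ‖y - x‖ ^ 2 := by ring

theorem le_add_inner_add_half_mul_norm_sq_of_lipschitz_gradient [CompleteSpace E]
    {g : E → ℝ} {g' : E → E} (hg : ∀ x, HasGradientAt g (g' x) x) {L : ℝ}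
    (hLip : ∀ a b, ‖g' a - g' b‖ ≤ L * ‖a - b‖)
    (x y : E) : g y ≤ g x + ⟪g' x, y - x⟫ + L / 2 * ‖y - x‖ ^ 2 := by
  have hderiv : ∀ t, HasDerivAt (fun s => g (lineMap x y s)) ⟪g' (lineMap x y t), y - x⟫ t :=
    fun t => (hg _).hasDerivAt_comp_lineMap
  have hbound : ∀ t, HasDerivAt (fun s => g x + s * ⟪g' x, y - x⟫ + L / 2 * s ^ 2 * ‖y - x‖ ^ 2)
      (⟪g' x, y - x⟫ + L * t * ‖y - x‖ ^ 2) t := by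
    intro t
    have := (((hasDerivAt_id' t).mul_const ⟪g' x, y - x⟫).const_add (g x)).add
      (((hasDerivAt_pow 2 t).const_mul (L / 2)).mul_const (‖y - x‖ ^ 2))
    exact this.congr_deriv (by push_cast; ring)
  have hfence := image_le_of_deriv_right_le_deriv_boundary
    (fun t _ => (hderiv t).continuousAt.continuousWithinAt)
    (fun t _ => (hderiv t).hasDerivWithinAt) (by simp)
    (fun t _ => (hbound t).continuousAt.continuousWithinAt)
    (fun t _ => (hbound t).hasDerivWithinAt)
    (fun t ht => by
      have := inner_sub_apply_lineMap_le hLip x y ht.1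
      rw [inner_sub_left] at this
      linarith)
    (Set.right_mem_Icc.2 zero_le_one)
  simpa using hfence

theorem inner_sub_sub_half_mul_norm_sq_le_of_dca_step {g h : E → ℝ} {L : ℝ} {v u θk θk1 θ : E}
    (hdescent : g θ ≤ g θk + ⟪v, θ - θk⟫ + L / 2 * ‖θ - θk‖ ^ 2)
    (hu : ∀ x, h θk + ⟪u, x - θk⟫ ≤ h x) (hmin : ∀ θ, g θk1 - ⟪u, θk1⟫ ≤ g θ - ⟪u, θ⟫) :
    ⟪v - u, θk - θ⟫ - L / 2 * ‖θ - θk‖ ^ 2 ≤ (g θk - h θk) - (g θk1 - h θk1) := by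
  have hsubgrad := hu θk1
  have hopt := hmin θ
  simp only [inner_sub_left, inner_sub_right] at hsubgrad hdescent ⊢
  linarith

theorem inner_sub_half_mul_norm_sq_sub_inv_smul (w x : E) {L : ℝ} (hL : L ≠ 0) :
    ⟪w, x - (x - L⁻¹ • w)⟫ - L / 2 * ‖x - L⁻¹ • w - x‖ ^ 2 = 1 / (2 * L) * ‖w‖ ^ 2 := by
  rw [sub_sub_cancel, sub_sub_cancel_left, norm_neg, norm_smul, real_inner_smul_right,
    real_inner_self_eq_norm_sq, mul_pow, Real.norm_eq_abs, sq_abs]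
  field_simp
  ring

end

theorem dca_gap_bound_general {d : ℕ}
    (g h f : EuclideanSpace ℝ (Fin d) → ℝ)
    (g' : EuclideanSpace ℝ (Fin d) → EuclideanSpace ℝ (Fin d))
    (hg' : ∀ x, HasGradientAt g (g' x) x)
    (L : ℝ) (hL : 0 < L)
    (hLsmooth : ∀ x y, ‖g' x - g' y‖ ≤ L * ‖x - y‖)
    (hf : ∀ x, f x = g x - h x)
    (θk θk1 u : EuclideanSpace ℝ (Fin d))
    (hu : ∀ x, h θk + (⟪u, x - θk⟫ : ℝ) ≤ h x)
    (hmin : ∀ θ, g θk1 - ⟪u, θk1⟫ ≤ g θ - ⟪u, θ⟫) :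
    (∀ θ, (⟪g' θk - u, θk - θ⟫ : ℝ) - (L / 2) * ‖θ - θk‖ ^ 2 ≤ f θk - f θk1) ∧
    (1 / (2 * L)) * ‖g' θk - u‖ ^ 2 ≤ f θk - f θk1 := by
  have gap : ∀ θ, (⟪g' θk - u, θk - θ⟫ : ℝ) - (L / 2) * ‖θ - θk‖ ^ 2 ≤ f θk - f θk1 :=
    fun θ => by
      simpa only [hf] using inner_sub_sub_half_mul_norm_sq_le_of_dca_step
        (le_add_inner_add_half_mul_norm_sq_of_lipschitz_gradient hg' hLsmooth θk θ) hu hmin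
  refine ⟨gap, ?_⟩
  simpa only [inner_sub_half_mul_norm_sq_sub_inv_smul _ _ hL.ne'] using
    gap (θk - L⁻¹ • (g' θk - u))

theorem dca_gap_bound {d : ℕ}
    (g h f : EuclideanSpace ℝ (Fin d) → ℝ)
    (g' : EuclideanSpace ℝ (Fin d) → EuclideanSpace ℝ (Fin d))
    (hg' : ∀ x, HasGradientAt g (g' x) x)
    (L : ℝ) (hL : 0 < L)
    (hLsmooth : ∀ x y, ‖g' x - g' y‖ ≤ L * ‖x - y‖)
    (hh : ConvexOn ℝ Set.univ h)
    (hf : ∀ x, f x = g x - h x)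
    (θk θk1 u : EuclideanSpace ℝ (Fin d))
    (hu : ∀ x, h θk + (⟪u, x - θk⟫ : ℝ) ≤ h x)
    (hmin : ∀ θ, g θk1 - ⟪u, θk1⟫ ≤ g θ - ⟪u, θ⟫) :
    (∀ θ, (⟪g' θk - u, θk - θ⟫ : ℝ) - (L / 2) * ‖θ - θk‖ ^ 2 ≤ f θk - f θk1) ∧
    (1 / (2 * L)) * ‖g' θk - u‖ ^ 2 ≤ f θk - f θk1 :=
  dca_gap_bound_general g h f g' hg' L hL hLsmooth hf θk θk1 u hu hmin
end
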